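/- arXiv:2109.02627 — 3 statements merged into one kernel-verified Lean document; each statement's English description precedes it below -/
import Mathlib

section
/- Let k be an algebraically closed field of characteristic p > 0, X/k a smooth projective surface with a projective embedding X ↪ ℙⁿ and O_X(1) the corresponding very ample line bundle, F : X → X the absolute Frobenius morphism, ω_X the canonical line bundle, and M a line bundle on X. Assume: (1) M is ample; (2) ω_X ⊗ M is arithmetically Cohen–Macaulay, i.e. H¹(X, ω_X ⊗ M ⊗ O_X(m)) = 0 for all integers m; (3) H⁰(X, ω_X ⊗ M ⊗ O_X(−p)) = 0. Then the vector bundle E = F_*(ω_X ⊗ M)(1) is an almost Ulrich bundle on X, i.e. H⁰(X, E(−m)) = 0 for all m ≥ 2, H¹(X, E(m)) = 0 for all m ∈ ℤ, and H²(X, E(−m)) = 0 for all m ≤ 1. -/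
/-!
An abstract model of a smooth projective surface `X` over an algebraically closed field `k`
of characteristic `p`, equipped with a projective embedding `X ↪ ℙⁿ` (recorded through the
very ample polarization `pol = O_X(1)`), its Picard group of line bundles, vector bundles and
their coherent cohomology, the pushforward along the absolute Frobenius `F : X → X`, the
intersection theory of irreducible curves on `X`, the Kodaira dimension, the Picard scheme,
and the canonical model.  The axiom fields record standard facts for such a surface
(`Hⁱ(F_*V) = Hⁱ(V)` since `F` is finite, the projection formula together with
`F^*L = L^{⊗p}`, Serre duality `H²(ω_X ⊗ L) ≅ H⁰(L⁻¹)^*`, vanishing of sections of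
anti-ample line bundles, adjunction for smooth surfaces in `ℙ³`, Mumford's description of
the canonical model, ...), none of which is currently available in Mathlib.
-/
structure SmoothProjSurface (k : Type) [Field k] [IsAlgClosed k] (p : ℕ) where
  /-- the Picard group of `X`: line bundles up to isomorphism, written multiplicatively -/
  Pic : Type
  /-- `Pic` is a commutative group under tensor product -/
  [picCommGroup : CommGroup Pic]
  /-- vector bundles (finite locally free sheaves) on `X`, up to isomorphism -/
  Bun : Type
  /-- a line bundle viewed as a vector bundle of rank one -/
  ofLine : Pic → Bun
  /-- tensor product of a vector bundle with a line bundle -/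
  tw : Bun → Pic → Bun
  tw_ofLine : ∀ L L' : Pic, tw (ofLine L) L' = ofLine (L * L')
  tw_mul : ∀ (V : Bun) (L L' : Pic), tw (tw V L) L' = tw V (L * L')
  tw_one : ∀ V : Bun, tw V 1 = V
  /-- `h i V = dim_k Hⁱ(X, V)`, the dimension of coherent sheaf cohomology -/
  h : ℕ → Bun → ℕ
  /-- pushforward of bundles along the absolute Frobenius `F : X → X` (finite flat since
  `X` is smooth, so it preserves vector bundles) -/
  Fstar : Bun → Bun
  /-- `Hⁱ(X, F_* V) = Hⁱ(X, V)` since `F` is finite -/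
  h_Fstar : ∀ (i : ℕ) (V : Bun), h i (Fstar V) = h i V
  /-- the projection formula `F_*(V) ⊗ L = F_*(V ⊗ F^* L)` combined with `F^* L = L^{⊗p}` -/
  projection : ∀ (V : Bun) (L : Pic), tw (Fstar V) L = Fstar (tw V (L ^ p))
  /-- the polarization `O_X(1)` induced by the given projective embedding `X ↪ ℙⁿ` -/
  pol : Pic
  /-- the canonical line bundle `ω_X` of the smooth surface `X` -/
  K : Pic
  /-- ampleness for line bundles on `X` -/
  IsAmple : Pic → Prop
  /-- `L` is very ample: the complete linear system `|L|` defines a closed embedding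
  `X ↪ ℙ(H⁰(X, L))` of `X` as a smooth projective surface -/
  IsVeryAmple : Pic → Prop
  /-- the polarization comes from a projective embedding, so it is very ample -/
  veryAmple_pol : IsVeryAmple pol
  /-- the polarization is ample -/
  isAmple_pol : IsAmple pol
  /-- a tensor product of ample line bundles is ample -/
  isAmple_mul : ∀ {L L' : Pic}, IsAmple L → IsAmple L' → IsAmple (L * L')
  /-- an anti-ample line bundle has no nonzero global sections -/
  h0_inv_eq_zero : ∀ L : Pic, IsAmple L → h 0 (ofLine L⁻¹) = 0
  /-- Serre duality on the smooth projective surface `X`: `H²(X, ω_X ⊗ L) ≅ H⁰(X, L⁻¹)^*` -/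
  serreDuality : ∀ L : Pic, h 2 (ofLine (K * L)) = h 0 (ofLine L⁻¹)
  /-- twisting up by powers of the (very ample) polarization does not decrease `h⁰` -/
  h0_mono : ∀ (L : Pic) (a b : ℤ), a ≤ b →
    h 0 (ofLine (L * pol ^ a)) ≤ h 0 (ofLine (L * pol ^ b))
  /-- the integral (irreducible, reduced) curves lying on `X` -/
  Curve : Type
  /-- the class of a curve on `X` in the Picard group -/
  cls : Curve → Pic
  /-- the intersection pairing of line bundles on the surface `X` -/
  inter : Pic → Pic → ℤ
  /-- the predicate that a curve on `X` is a smooth rational curve -/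
  SmoothRational : Curve → Prop
  /-- the Kodaira dimension of `X` -/
  kodairaDim : WithBot ℤ
  /-- the Picard scheme of `X` is reduced -/
  PicSchemeReduced : Prop
  /-- the identity component of the Picard scheme of `X` is trivial (equal to zero) -/
  PicSchemeIdentityComponentTrivial : Prop
  /-- the tangent space at the identity of the Picard scheme of `X` is `H¹(X, O_X)`;
  if the Picard scheme is reduced with trivial identity component, this tangent space,
  and hence `H¹(X, O_X)`, vanishes -/
  h1_O_of_picScheme : PicSchemeReduced → PicSchemeIdentityComponentTrivial →
    h 1 (ofLine 1) = 0
  /-- the birational morphism from `X` to its canonical model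
  `X^{can} = Proj (⊕ₘ H⁰(X, ω_X^m))` is an isomorphism -/
  CanonicalModelMapIsIso : Prop
  /-- Mumford: for a minimal surface of general type, `X → X^{can}` contracts exactly the
  smooth rational curves of self-intersection `-2` and is an isomorphism off them; hence it
  is an isomorphism iff `X` carries no such curves -/
  canonicalModelMapIsIso_iff : kodairaDim = 2 →
    (∀ C : Curve, ¬ (SmoothRational C ∧ inter (cls C) (cls C) = -1)) →
    (CanonicalModelMapIsIso ↔
      ∀ C : Curve, ¬ (SmoothRational C ∧ inter (cls C) (cls C) = -2))
  /-- `X` is embedded in `ℙ³` as a smooth surface of degree `d`, the polarization `pol`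
  being the restriction of `O_{ℙ³}(1)` -/
  InP3OfDegree : ℕ → Prop
  /-- adjunction: a smooth surface of degree `d` in `ℙ³` has `ω_X = O_X(d - 4)` -/
  K_of_inP3 : ∀ d : ℕ, InP3OfDegree d → K = pol ^ ((d : ℤ) - 4)
  /-- a smooth surface in `ℙ³` is arithmetically Cohen–Macaulay:
  `H¹(X, O_X(ℓ)) = 0` for all `ℓ ∈ ℤ` -/
  acm_of_inP3 : ∀ d : ℕ, InP3OfDegree d → ∀ ℓ : ℤ, h 1 (ofLine (pol ^ ℓ)) = 0

attribute [instance] SmoothProjSurface.picCommGroup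

namespace SmoothProjSurface

variable {k : Type} [Field k] [IsAlgClosed k] {p : ℕ} (S : SmoothProjSurface k p)

/-- `V(m) = V ⊗ O_X(m)`, the `m`-th twist of a bundle by the polarization. -/
def twist (V : S.Bun) (m : ℤ) : S.Bun := S.tw V (S.pol ^ m)

/-- A vector bundle `E` on the polarized surface `(X, O_X(1))` is *almost Ulrich* if
`H⁰(E(-m)) = 0` for all `m ≥ 2`, `H¹(E(m)) = 0` for all `m ∈ ℤ` (i.e. `E` is ACM), and
`H²(E(-m)) = 0` for all `m ≤ 1`. -/
def AlmostUlrich (E : S.Bun) : Prop :=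
  (∀ m : ℤ, 2 ≤ m → S.h 0 (S.twist E (-m)) = 0) ∧
  (∀ m : ℤ, S.h 1 (S.twist E m) = 0) ∧
  (∀ m : ℤ, m ≤ 1 → S.h 2 (S.twist E (-m)) = 0)

/-- A vector bundle `E` is *arithmetically Cohen–Macaulay* (ACM) if `H¹(E(m)) = 0`
for all `m ∈ ℤ`. -/
def IsACM (E : S.Bun) : Prop := ∀ m : ℤ, S.h 1 (S.twist E m) = 0

/-- The surface `X` is *minimal* if it contains no exceptional curves, i.e. no smooth
rational curves of self-intersection `-1`. -/
def Minimal : Prop :=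
  ∀ C : S.Curve, ¬ (S.SmoothRational C ∧ S.inter (S.cls C) (S.cls C) = -1)

end SmoothProjSurface

namespace SmoothProjSurface

variable {k : Type} [Field k] [IsAlgClosed k] {p : ℕ} (S : SmoothProjSurface k p)

theorem twist_twist (V : S.Bun) (a b : ℤ) : S.twist (S.twist V a) b = S.twist V (a + b) := by
  rw [twist, twist, twist, tw_mul, zpow_add]

theorem twist_ofLine (L : S.Pic) (m : ℤ) : S.twist (S.ofLine L) m = S.ofLine (L * S.pol ^ m) :=
  S.tw_ofLine L _

theorem twist_Fstar (V : S.Bun) (m : ℤ) :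
    S.twist (S.Fstar V) m = S.Fstar (S.twist V (m * p)) := by
  rw [twist, twist, projection, ← zpow_natCast, ← zpow_mul]

theorem h_twist_Fstar (i : ℕ) (V : S.Bun) (m : ℤ) :
    S.h i (S.twist (S.Fstar V) m) = S.h i (S.twist V (m * p)) := by
  rw [twist_Fstar, h_Fstar]

theorem isAmple_mul_pol_zpow {L : S.Pic} (hL : S.IsAmple L) {n : ℤ} (hn : 0 ≤ n) :
    S.IsAmple (L * S.pol ^ n) := by
  lift n to ℕ using hn
  induction n with
  | zero => simpa using hL
  | succ n ih =>
    rw [Nat.cast_succ, zpow_add_one, ← mul_assoc]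
    exact S.isAmple_mul ih S.isAmple_pol

theorem h0_mul_pol_zpow_eq_zero_of_le {L : S.Pic} {a b : ℤ} (hab : a ≤ b)
    (hb : S.h 0 (S.ofLine (L * S.pol ^ b)) = 0) : S.h 0 (S.ofLine (L * S.pol ^ a)) = 0 :=
  Nat.eq_zero_of_le_zero ((S.h0_mono L a b hab).trans_eq hb)

theorem h2_K_mul_eq_zero {L : S.Pic} (hL : S.IsAmple L) : S.h 2 (S.ofLine (S.K * L)) = 0 := by
  rw [serreDuality, h0_inv_eq_zero _ _ hL]

end SmoothProjSurface

open SmoothProjSurface in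
theorem almostUlrich_frobenius_pushforward_general
    (k : Type) [Field k] [IsAlgClosed k] (p : ℕ)
    (S : SmoothProjSurface k p) (M : S.Pic)
    (hM : S.IsAmple M)
    (hACM : ∀ m : ℤ, S.h 1 (S.ofLine (S.K * M * S.pol ^ m)) = 0)
    (hH0 : S.h 0 (S.ofLine (S.K * M * S.pol ^ (-(p : ℤ)))) = 0) :
    S.AlmostUlrich (S.twist (S.Fstar (S.ofLine (S.K * M))) 1) := by
  -- Every twist of `E` is, cohomologically, a twist of `ω_X ⊗ M` by a multiple of `p`:
  -- vanishing of `H⁰` then comes from `hH0`, and of `H²` from Serre duality and ampleness.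
  have hE : ∀ (i : ℕ) (n : ℤ), S.h i (S.twist (S.twist (S.Fstar (S.ofLine (S.K * M))) 1) n)
      = S.h i (S.ofLine (S.K * M * S.pol ^ ((1 + n) * p))) := fun i n => by
    rw [twist_twist, h_twist_Fstar, twist_ofLine]
  refine ⟨fun m hm => ?_, fun m => (hE 1 m).trans (hACM _), fun m hm => ?_⟩
  · rw [hE]
    exact S.h0_mul_pol_zpow_eq_zero_of_le (by nlinarith) hH0
  · rw [hE, mul_assoc]
    exact S.h2_K_mul_eq_zero (S.isAmple_mul_pol_zpow hM (by nlinarith))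

open SmoothProjSurface in
/-- Theorem, corrected main theorem.  Let `X` be a smooth projective
surface over an algebraically closed field `k` of characteristic `p > 0`, embedded in `ℙⁿ`
with polarization `O_X(1)`, and let `M` be a line bundle on `X`.  If `M` is ample,
`ω_X ⊗ M` is ACM (`H¹(ω_X ⊗ M ⊗ O_X(m)) = 0` for all `m ∈ ℤ`), and
`H⁰(ω_X ⊗ M ⊗ O_X(-p)) = 0`, then `E = F_*(ω_X ⊗ M)(1)` is an almost Ulrich bundle. -/
theorem almostUlrich_frobenius_pushforward
    (k : Type) [Field k] [IsAlgClosed k] (p : ℕ) [CharP k p] (hp : 0 < p)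
    (S : SmoothProjSurface k p) (M : S.Pic)
    (hM : S.IsAmple M)
    (hACM : ∀ m : ℤ, S.h 1 (S.ofLine (S.K * M * S.pol ^ m)) = 0)
    (hH0 : S.h 0 (S.ofLine (S.K * M * S.pol ^ (-(p : ℤ)))) = 0) :
    S.AlmostUlrich (S.twist (S.Fstar (S.ofLine (S.K * M))) 1) :=
  almostUlrich_frobenius_pushforward_general k p S M hM hACM hH0
end

section
/- Let X ⊂ ℙ³ be a smooth surface of degree d over an algebraically closed field k of characteristic p > 0, with O_X(1) the polarization from ℙ³. Let r ≥ 1 be an integer with d − 4 + r < p, and set M = O_X(r). Then E = F_*(ω_X(r))(1) = F_*(ω_X ⊗ O_X(r))(1) is an almost Ulrich bundle on X. -/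
/-!
By the projection formula, `E(m) = F_*(ω_X(r + (1 + m)p))`, and `F_*` preserves cohomology, so
the cohomology of `E(m)` is that of the line bundle `ω_X(r + (1 + m)p) = O_X(d - 4 + r + (1 + m)p)`.
Its `H¹` vanishes because `X` is ACM. For `m ≤ -2` the degree is at most `d - 4 + r - p < 0`,
so `H⁰` vanishes. For `m ≥ -1`, Serre duality identifies `H²` with the dual of
`H⁰(O_X(-r - (1 + m)p))`, which vanishes since `r ≥ 1`.
-/

namespace SmoothProjSurface

variable {k : Type} [Field k] [IsAlgClosed k] {p : ℕ} (S : SmoothProjSurface k p)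

theorem isAmple_pol_zpow {n : ℤ} (hn : 0 < n) : S.IsAmple (S.pol ^ n) := by
  induction n, hn using Int.leInduction with
  | base => simpa using S.isAmple_pol
  | succ n _ ih => simpa [zpow_add_one] using S.isAmple_mul ih S.isAmple_pol

theorem h0_pol_zpow_eq_zero {n : ℤ} (hn : n < 0) : S.h 0 (S.ofLine (S.pol ^ n)) = 0 := by
  simpa [← zpow_neg] using S.h0_inv_eq_zero _ (S.isAmple_pol_zpow (neg_pos.mpr hn))

theorem h2_K_mul_pol_zpow_eq_zero {n : ℤ} (hn : 0 < n) :
    S.h 2 (S.ofLine (S.K * S.pol ^ n)) = 0 := by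
  rw [S.serreDuality, ← zpow_neg]
  exact S.h0_pol_zpow_eq_zero (neg_neg_of_pos hn)

theorem h_twist_Fstar_ofLine (i : ℕ) (L : S.Pic) (m : ℤ) :
    S.h i (S.twist (S.Fstar (S.ofLine L)) m) = S.h i (S.ofLine (L * S.pol ^ (m * p))) := by
  rw [twist_Fstar, h_Fstar, twist_ofLine]

end SmoothProjSurface

open SmoothProjSurface in
theorem almostUlrich_of_surface_in_P3_general
    (k : Type) [Field k] [IsAlgClosed k] (p : ℕ)
    (S : SmoothProjSurface k p)
    (d : ℕ) (hd : S.InP3OfDegree d)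
    (r : ℕ) (hr : 1 ≤ r)
    (hdr : (d : ℤ) - 4 + r < p) :
    S.AlmostUlrich (S.twist (S.Fstar (S.ofLine (S.K * S.pol ^ (r : ℤ)))) 1) := by
  have hE : ∀ (i : ℕ) (m : ℤ),
      S.h i (S.twist (S.twist (S.Fstar (S.ofLine (S.K * S.pol ^ (r : ℤ)))) 1) m)
        = S.h i (S.ofLine (S.K * S.pol ^ (r + (1 + m) * p))) := by
    intro i m
    rw [twist_twist, h_twist_Fstar_ofLine, mul_assoc, ← zpow_add]
  have hK := S.K_of_inP3 d hd
  refine ⟨fun m hm => ?_, fun m => ?_, fun m hm => ?_⟩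
  · rw [hE, hK, ← zpow_add]
    exact S.h0_pol_zpow_eq_zero (by nlinarith)
  · rw [hE, hK, ← zpow_add]
    exact S.acm_of_inP3 d hd _
  · rw [hE]
    exact S.h2_K_mul_pol_zpow_eq_zero (by nlinarith)

open SmoothProjSurface in
/-- Corollary.  Let `X ⊂ ℙ³` be a smooth surface of degree `d` over an
algebraically closed field `k` of characteristic `p > 0`, with `O_X(1)` the polarization
from `ℙ³`.  Let `r ≥ 1` be an integer with `d - 4 + r < p`, and set `M = O_X(r)`.  Then
`E = F_*(ω_X ⊗ O_X(r))(1)` is an almost Ulrich bundle on `X`. -/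
theorem almostUlrich_of_surface_in_P3
    (k : Type) [Field k] [IsAlgClosed k] (p : ℕ) [CharP k p] (hp : 0 < p)
    (S : SmoothProjSurface k p)
    (d : ℕ) (hd : S.InP3OfDegree d)
    (r : ℕ) (hr : 1 ≤ r)
    (hdr : (d : ℤ) - 4 + r < p) :
    S.AlmostUlrich (S.twist (S.Fstar (S.ofLine (S.K * S.pol ^ (r : ℤ)))) 1) :=
  almostUlrich_of_surface_in_P3_general k p S d hd r hr hdr
end

section
/- Let X ⊂ ℙ³ be a smooth quintic surface (degree d = 5) over an algebraically closed field k of characteristic p > 2. Then ω_X = O_X(1), and E = F_*(ω_X²)(1) is an almost Ulrich bundle on X for the polarization O_X(1). -/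
/-!
By adjunction `ω_X = O_X(1)`. The projection formula turns each twist `E(m)` into
`F_*(O_X(2 + (1 + m)p))`, and `F_*` does not change cohomology, so every condition becomes a
statement about a line bundle `O_X(ℓ)`: `H¹` vanishes because `X ⊂ ℙ³` is ACM, `H⁰(O_X(ℓ))`
vanishes for `ℓ < 0`, which for `ℓ = 2 + (1 - m)p` with `m ≥ 2` is where `p > 2` enters, and
`H²(O_X(ℓ)) ≅ H⁰(O_X(1 - ℓ))^*` by Serre duality vanishes for `ℓ ≥ 2`.
-/

namespace SmoothProjSurface

variable {k : Type} [Field k] [IsAlgClosed k] {p : ℕ} (S : SmoothProjSurface k p)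

theorem h0_ofLine_pol_zpow_eq_zero {e : ℤ} (he : e < 0) : S.h 0 (S.ofLine (S.pol ^ e)) = 0 := by
  have h_minus_one : S.h 0 (S.ofLine (S.pol ^ (-1 : ℤ))) = 0 := by
    rw [zpow_neg_one]
    exact S.h0_inv_eq_zero S.pol S.isAmple_pol
  have h_mono := S.h0_mono 1 e (-1) (by omega)
  simp only [one_mul] at h_mono
  omega

theorem h2_ofLine_K_mul_pol_zpow_eq_zero {e : ℤ} (he : 0 < e) :
    S.h 2 (S.ofLine (S.K * S.pol ^ e)) = 0 := by
  rw [serreDuality, ← zpow_neg]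
  exact S.h0_ofLine_pol_zpow_eq_zero (by omega)

theorem K_eq_pol_of_inP3_five (hd : S.InP3OfDegree 5) : S.K = S.pol := by
  simpa using S.K_of_inP3 5 hd

end SmoothProjSurface

open SmoothProjSurface in
theorem almostUlrich_of_quintic_in_P3_general
    (k : Type) [Field k] [IsAlgClosed k] (p : ℕ) (hp : 2 < p)
    (S : SmoothProjSurface k p)
    (hd : S.InP3OfDegree 5) :
    S.K = S.pol ∧ S.AlmostUlrich (S.twist (S.Fstar (S.ofLine (S.K ^ 2))) 1) := by
  have hK := S.K_eq_pol_of_inP3_five hd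
  have h_twist (i : ℕ) (m : ℤ) :
      S.h i (S.twist (S.twist (S.Fstar (S.ofLine (S.K ^ 2))) 1) m) =
        S.h i (S.ofLine (S.pol ^ (2 + (1 + m) * p))) := by
    rw [twist_twist, h_twist_Fstar_ofLine, hK, ← zpow_natCast, ← zpow_add]
    rfl
  refine ⟨hK, fun m hm => ?_, fun m => ?_, fun m hm => ?_⟩
  · rw [h_twist]
    exact S.h0_ofLine_pol_zpow_eq_zero (by nlinarith)
  · rw [h_twist]
    exact S.acm_of_inP3 5 hd _
  · rw [h_twist, show 2 + (1 + -m) * (p : ℤ) = 1 + (1 + (1 + -m) * p) by ring, zpow_add,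
      zpow_one]
    nth_rw 1 [← hK]
    exact S.h2_ofLine_K_mul_pol_zpow_eq_zero (by nlinarith)

open SmoothProjSurface in
/-- Let `X ⊂ ℙ³` be a smooth quintic surface (degree `d = 5`) over an
algebraically closed field `k` of characteristic `p > 2`.  Then `ω_X = O_X(1)`, and
`E = F_*(ω_X²)(1)` is an almost Ulrich bundle on `X` for the polarization `O_X(1)`. -/
theorem almostUlrich_of_quintic_in_P3
    (k : Type) [Field k] [IsAlgClosed k] (p : ℕ) [CharP k p] (hp : 2 < p)
    (S : SmoothProjSurface k p)
    (hd : S.InP3OfDegree 5) :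
    S.K = S.pol ∧ S.AlmostUlrich (S.twist (S.Fstar (S.ofLine (S.K ^ 2))) 1) :=
  almostUlrich_of_quintic_in_P3_general k p hp S hd
end
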